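/- arXiv:2507.11260 — 2 statements merged into one kernel-verified Lean document; each statement's English description precedes it below -/
import Mathlib

section
/- Let X be a finite set of n points in a metric space, C a finite set of centers, and m ≤ n a nonnegative integer. Then the robust k-median cost with m outliers satisfies cost^{(m)}(X,C) = ∫₀^∞ max(|X ∖ B(C,u)| − m, 0) du, where B(C,u) = {x : dist(x,C) ≤ u}. -/
/-! An `m`-subset `L ⊆ X` of maximal total distance to `C` consists of `m` largest distances
(exchange argument), so it realises the robust cost, and at every level `u` the points of
`X ∖ L` farther than `u` from `C` number exactly `max (#{x ∈ X | u < dist(x, C)} - m) 0`.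
Integrating this count over `u > 0` is the layer-cake formula for `∑ x ∈ X ∖ L, dist(x, C)`. -/

open Metric MeasureTheory

/-- The robust `k`-median cost with `m` outliers: the minimum over all `m`-point
subsets `L ⊆ X` of the total distance of `X ∖ L` to the center set `C`. -/
noncomputable def robustCostOut {M : Type*} [MetricSpace M] [DecidableEq M]
    (X C : Finset M) (m : ℕ) : ℝ :=
  sInf {c : ℝ | ∃ L ⊆ X, L.card = m ∧ c = ∑ x ∈ X \ L, Metric.infDist x (C : Set M)}

theorem Nat.cast_sub_eq_max {R : Type*} [Ring R] [LinearOrder R] [IsStrictOrderedRing R]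
    (a b : ℕ) : ((a - b : ℕ) : R) = max ((a : R) - b) 0 := by
  rcases le_total b a with h | h
  · rw [Nat.cast_sub h, max_eq_left (sub_nonneg.2 (by exact_mod_cast h))]
  · rw [Nat.sub_eq_zero_of_le h, Nat.cast_zero, max_eq_right (sub_nonpos.2 (by exact_mod_cast h))]

theorem integrableOn_Ioi_indicator_Iio (a : ℝ) :
    IntegrableOn ((Set.Iio a).indicator (1 : ℝ → ℝ)) (Set.Ioi 0) := by
  rw [IntegrableOn, integrable_indicator_iff measurableSet_Iio]
  refine integrableOn_const ?_
  rw [Measure.restrict_apply measurableSet_Iio, Set.inter_comm, Set.Ioi_inter_Iio]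
  exact measure_Ioo_lt_top.ne

theorem setIntegral_Ioi_indicator_Iio {a : ℝ} (ha : 0 ≤ a) :
    ∫ u in Set.Ioi (0 : ℝ), (Set.Iio a).indicator (1 : ℝ → ℝ) u = a := by
  rw [setIntegral_indicator measurableSet_Iio, Set.Ioi_inter_Iio]
  simp [ha]

namespace Finset

variable {α : Type*} {X L : Finset α} {d : α → ℝ}

theorem setIntegral_Ioi_card_filter_lt (S : Finset α) (hd : ∀ x ∈ S, 0 ≤ d x) :
    ∫ u in Set.Ioi (0 : ℝ), ((S.filter (u < d ·)).card : ℝ) = ∑ x ∈ S, d x := by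
  have hcount (u : ℝ) :
      ((S.filter (u < d ·)).card : ℝ) = ∑ x ∈ S, (Set.Iio (d x)).indicator 1 u := by
    simp [Set.indicator_apply]
  simp_rw [hcount]
  rw [integral_finsetSum _ fun x _ => integrableOn_Ioi_indicator_Iio (d x)]
  exact sum_congr rfl fun x hx => setIntegral_Ioi_indicator_Iio (hd x hx)

theorem exists_subset_card_eq_forall_sum_le {m : ℕ} (d : α → ℝ) (hm : m ≤ X.card) :
    ∃ L ⊆ X, L.card = m ∧ ∀ L' ⊆ X, L'.card = m → ∑ x ∈ L', d x ≤ ∑ x ∈ L, d x := by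
  obtain ⟨L₁, hL₁X, hL₁card⟩ := exists_subset_card_eq hm
  obtain ⟨L, hL, hmax⟩ := exists_max_image (X.powersetCard m) (fun L => ∑ x ∈ L, d x)
    ⟨L₁, mem_powersetCard.2 ⟨hL₁X, hL₁card⟩⟩
  obtain ⟨hLX, hLcard⟩ := mem_powersetCard.1 hL
  exact ⟨L, hLX, hLcard, fun L' hL'X hL'card => hmax L' (mem_powersetCard.2 ⟨hL'X, hL'card⟩)⟩

variable [DecidableEq α]

theorem le_of_mem_sdiff_of_forall_sum_le (hLX : L ⊆ X)
    (hmax : ∀ L' ⊆ X, L'.card = L.card → ∑ x ∈ L', d x ≤ ∑ x ∈ L, d x)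
    {x y : α} (hx : x ∈ X \ L) (hy : y ∈ L) : d x ≤ d y := by
  obtain ⟨hxX, hxL⟩ := mem_sdiff.1 hx
  have hx_erase : x ∉ L.erase y := fun h => hxL (mem_of_mem_erase h)
  have hswap_sub : insert x (L.erase y) ⊆ X :=
    insert_subset hxX ((erase_subset y L).trans hLX)
  have hswap_card : (insert x (L.erase y)).card = L.card := by
    rw [card_insert_of_notMem hx_erase, card_erase_add_one hy]
  have hswap_le := hmax _ hswap_sub hswap_card
  rw [sum_insert hx_erase, ← add_sum_erase L d hy] at hswap_le
  linarith

theorem isLeast_sum_sdiff (hLX : L ⊆ X)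
    (hmax : ∀ L' ⊆ X, L'.card = L.card → ∑ x ∈ L', d x ≤ ∑ x ∈ L, d x) :
    IsLeast {c : ℝ | ∃ L' ⊆ X, L'.card = L.card ∧ c = ∑ x ∈ X \ L', d x}
      (∑ x ∈ X \ L, d x) := by
  refine ⟨⟨L, hLX, rfl, rfl⟩, ?_⟩
  rintro c ⟨L', hL'X, hL'card, rfl⟩
  have hL'_le := hmax L' hL'X hL'card
  have hL_split := sum_sdiff (f := d) hLX
  have hL'_split := sum_sdiff (f := d) hL'X
  linarith

theorem card_filter_lt_sub_card (hLX : L ⊆ X)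
    (hle : ∀ x ∈ X \ L, ∀ y ∈ L, d x ≤ d y) (u : ℝ) :
    (X.filter (u < d ·)).card - L.card = ((X \ L).filter (u < d ·)).card := by
  have hsplit : (X.filter (u < d ·)).card
      = (L.filter (u < d ·)).card + ((X \ L).filter (u < d ·)).card := by
    rw [← card_union_of_disjoint (disjoint_filter_filter disjoint_sdiff), ← filter_union,
      union_sdiff_of_subset hLX]
  rcases ((X \ L).filter (u < d ·)).eq_empty_or_nonempty with hempty | ⟨x, hx⟩
  · have := card_filter_le L (u < d ·)
    rw [hempty, card_empty] at hsplit ⊢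
    omega
  · obtain ⟨hxXL, hux⟩ := mem_filter.1 hx
    have hall : L.filter (u < d ·) = L :=
      filter_true_of_mem fun y hy => hux.trans_le (hle x hxXL y hy)
    rw [hall] at hsplit
    omega

end Finset

theorem robust_cost_integral_representation_general {M : Type*} [MetricSpace M] [DecidableEq M]
    (X C : Finset M) (m : ℕ) (hm : m ≤ X.card) :
    robustCostOut X C m =
      ∫ u in Set.Ioi (0 : ℝ),
        max (((X.filter (fun x => u < Metric.infDist x (C : Set M))).card : ℝ) - (m : ℝ)) 0 := by
  set d : M → ℝ := fun x => infDist x (C : Set M)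
  obtain ⟨L, hLX, rfl, hmax⟩ := X.exists_subset_card_eq_forall_sum_le d hm
  have hle : ∀ x ∈ X \ L, ∀ y ∈ L, d x ≤ d y := fun x hx y hy =>
    Finset.le_of_mem_sdiff_of_forall_sum_le hLX hmax hx hy
  rw [robustCostOut, (Finset.isLeast_sum_sdiff hLX hmax).csInf_eq,
    ← (X \ L).setIntegral_Ioi_card_filter_lt fun x _ => infDist_nonneg]
  refine setIntegral_congr_fun measurableSet_Ioi fun u _ => ?_
  rw [← Finset.card_filter_lt_sub_card hLX hle u, Nat.cast_sub_eq_max]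

/-- Integral representation of the robust `k`-median cost with `m` outliers:
`cost^{(m)}(X,C) = ∫₀^∞ max(|X ∖ B(C,u)| − m, 0) du`. -/
theorem robust_cost_integral_representation {M : Type*} [MetricSpace M] [DecidableEq M]
    (X C : Finset M) (hC : C.Nonempty) (m : ℕ) (hm : m ≤ X.card) :
    robustCostOut X C m =
      ∫ u in Set.Ioi (0 : ℝ),
        max (((X.filter (fun x => u < Metric.infDist x (C : Set M))).card : ℝ) - (m : ℝ)) 0 :=
  robust_cost_integral_representation_general X C m hm
end

section
/- Let δ be an ε-smoothed distance function of (M, dist) with 0 < ε < 1, let Y be a finite weighted set of points, C a center set, and t < ‖Y‖₁. Then (1−ε)·cost^{(t)}(Y,C) ≤ cost^{(t,δ)}(Y,C) ≤ (1+ε)·cost^{(t)}(Y,C), where cost^{(t,δ)} uses δ in place of dist both for selecting the weight-t outlier set and for the cost. -/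
open Metric

/-- The robust clustering cost with outlier weight `t`, computed with respect to a
general distance-like function `d` (used both for selecting the weight-`t` outlier
set and for the cost). -/
noncomputable def genRobustCost {M : Type*} [MetricSpace M]
    (d : M → M → ℝ) (Y : Finset M) (w : M → ℝ) (C : Finset M) (hC : C.Nonempty)
    (t : ℝ) : ℝ :=
  sInf {c : ℝ | ∃ v : M → ℝ, (∀ y ∈ Y, 0 ≤ v y ∧ v y ≤ w y) ∧ (∑ y ∈ Y, v y) = t ∧
    c = ∑ y ∈ Y, (w y - v y) * C.inf' hC (fun p => d y p)}

/-- If `δ` is an `ε`-smoothed distance function of `(M, dist)`, then the robust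
cost computed with `δ` is within multiplicative factors `(1−ε)` and `(1+ε)` of the
robust cost computed with `dist`. -/
theorem smoothed_robust_cost_approximation {M : Type*} [MetricSpace M]
    (ε : ℝ) (hε0 : 0 < ε) (hε1 : ε < 1)
    (δ : M → M → ℝ)
    (hδ : ∀ x y : M, (1 - ε) * dist x y ≤ δ x y ∧ δ x y ≤ (1 + ε) * dist x y)
    (Y : Finset M) (w : M → ℝ) (hw : ∀ y ∈ Y, 0 ≤ w y)
    (C : Finset M) (hC : C.Nonempty)
    (t : ℝ) (ht0 : 0 ≤ t) (htY : t < ∑ y ∈ Y, w y) :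
    (1 - ε) * genRobustCost (fun x y => dist x y) Y w C hC t ≤
        genRobustCost δ Y w C hC t ∧
      genRobustCost δ Y w C hC t ≤
        (1 + ε) * genRobustCost (fun x y => dist x y) Y w C hC t := by
  have hε1' : (0:ℝ) < 1 - ε := by linarith
  have hε2' : (0:ℝ) < 1 + ε := by linarith
  set A : Set ℝ := {c : ℝ | ∃ v : M → ℝ, (∀ y ∈ Y, 0 ≤ v y ∧ v y ≤ w y) ∧
    (∑ y ∈ Y, v y) = t ∧
    c = ∑ y ∈ Y, (w y - v y) * C.inf' hC (fun p => dist y p)} with hA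
  set B : Set ℝ := {c : ℝ | ∃ v : M → ℝ, (∀ y ∈ Y, 0 ≤ v y ∧ v y ≤ w y) ∧
    (∑ y ∈ Y, v y) = t ∧
    c = ∑ y ∈ Y, (w y - v y) * C.inf' hC (fun p => δ y p)} with hB
  have hcostA : genRobustCost (fun x y => dist x y) Y w C hC t = sInf A := rfl
  have hcostB : genRobustCost δ Y w C hC t = sInf B := rfl
  have hdist_nonneg : ∀ y : M, (0:ℝ) ≤ C.inf' hC (fun p => dist y p) := by
    intro y; exact Finset.le_inf' hC _ (fun p _ => dist_nonneg)
  have hdelta_lb : ∀ y : M,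
      (1 - ε) * C.inf' hC (fun p => dist y p) ≤ C.inf' hC (fun p => δ y p) := by
    intro y
    apply Finset.le_inf'
    intro p hp
    have h1 := Finset.inf'_le (fun p => dist y p) hp
    nlinarith [(hδ y p).1]
  have hdelta_nonneg : ∀ y : M, (0:ℝ) ≤ C.inf' hC (fun p => δ y p) := by
    intro y
    have := hdelta_lb y
    nlinarith [hdist_nonneg y]
  have hdelta_ub : ∀ y : M,
      C.inf' hC (fun p => δ y p) ≤ (1 + ε) * C.inf' hC (fun p => dist y p) := by
    intro y
    obtain ⟨p, hp, hpe⟩ := Finset.exists_mem_eq_inf' hC (fun p => dist y p)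
    calc C.inf' hC (fun p => δ y p) ≤ δ y p := Finset.inf'_le _ hp
      _ ≤ (1 + ε) * dist y p := (hδ y p).2
      _ = (1 + ε) * C.inf' hC (fun p => dist y p) := by rw [hpe]
  -- feasible weight witness
  have hS : (0:ℝ) < ∑ y ∈ Y, w y := lt_of_le_of_lt ht0 htY
  set v₀ : M → ℝ := fun y => (t / ∑ y ∈ Y, w y) * w y with hv₀
  have hv₀feas : ∀ y ∈ Y, 0 ≤ v₀ y ∧ v₀ y ≤ w y := by
    intro y hy
    constructor
    · exact mul_nonneg (div_nonneg ht0 hS.le) (hw y hy)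
    · have h1 : t / ∑ y ∈ Y, w y ≤ 1 := by
        rw [div_le_one hS]; exact htY.le
      show (t / ∑ y ∈ Y, w y) * w y ≤ w y
      nlinarith [hw y hy]
  have hv₀sum : (∑ y ∈ Y, v₀ y) = t := by
    simp only [hv₀, ← Finset.mul_sum]
    field_simp
  have hAne : A.Nonempty := ⟨_, v₀, hv₀feas, hv₀sum, rfl⟩
  have hBne : B.Nonempty := ⟨_, v₀, hv₀feas, hv₀sum, rfl⟩
  have hterm : ∀ (v : M → ℝ), (∀ y ∈ Y, 0 ≤ v y ∧ v y ≤ w y) →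
      ∀ y ∈ Y, (0:ℝ) ≤ w y - v y := by
    intro v hv y hy; have := (hv y hy).2; linarith
  have hAbd : BddBelow A := by
    refine ⟨0, ?_⟩
    rintro c ⟨v, hv, -, rfl⟩
    exact Finset.sum_nonneg fun y hy => mul_nonneg (hterm v hv y hy) (hdist_nonneg y)
  have hBbd : BddBelow B := by
    refine ⟨0, ?_⟩
    rintro c ⟨v, hv, -, rfl⟩
    exact Finset.sum_nonneg fun y hy => mul_nonneg (hterm v hv y hy) (hdelta_nonneg y)
  have hcmp_lb : ∀ (v : M → ℝ), (∀ y ∈ Y, 0 ≤ v y ∧ v y ≤ w y) →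
      (1 - ε) * ∑ y ∈ Y, (w y - v y) * C.inf' hC (fun p => dist y p) ≤
        ∑ y ∈ Y, (w y - v y) * C.inf' hC (fun p => δ y p) := by
    intro v hv
    rw [Finset.mul_sum]
    refine Finset.sum_le_sum fun y hy => ?_
    have h1 := hdelta_lb y
    have h2 := hterm v hv y hy
    nlinarith
  have hcmp_ub : ∀ (v : M → ℝ), (∀ y ∈ Y, 0 ≤ v y ∧ v y ≤ w y) →
      (∑ y ∈ Y, (w y - v y) * C.inf' hC (fun p => δ y p)) ≤
        (1 + ε) * ∑ y ∈ Y, (w y - v y) * C.inf' hC (fun p => dist y p) := by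
    intro v hv
    rw [Finset.mul_sum]
    refine Finset.sum_le_sum fun y hy => ?_
    have h1 := hdelta_ub y
    have h2 := hterm v hv y hy
    nlinarith
  rw [hcostA, hcostB]
  constructor
  · apply le_csInf hBne
    rintro b ⟨v, hv, hsum, rfl⟩
    have h1 : sInf A ≤ ∑ y ∈ Y, (w y - v y) * C.inf' hC (fun p => dist y p) :=
      csInf_le hAbd ⟨v, hv, hsum, rfl⟩
    have h2 := hcmp_lb v hv
    nlinarith
  · have key : ∀ a ∈ A, sInf B ≤ (1 + ε) * a := by
      rintro a ⟨v, hv, hsum, rfl⟩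
      have h1 : sInf B ≤ ∑ y ∈ Y, (w y - v y) * C.inf' hC (fun p => δ y p) :=
        csInf_le hBbd ⟨v, hv, hsum, rfl⟩
      have h2 := hcmp_ub v hv
      linarith
    have h3 : sInf B / (1 + ε) ≤ sInf A := by
      apply le_csInf hAne
      intro a ha
      rw [div_le_iff₀ hε2']
      calc sInf B ≤ (1 + ε) * a := key a ha
        _ = a * (1 + ε) := mul_comm _ _
    calc sInf B = (sInf B / (1 + ε)) * (1 + ε) := by field_simp
      _ ≤ sInf A * (1 + ε) := by nlinarith
      _ = (1 + ε) * sInf A := mul_comm _ _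
end
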